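/- Let S = {x + iy ∈ ℂ : x > 0, |y| < 1/2} be the half-strip and let τ(z) = sinh(πz), which maps S conformally onto the right half-plane {Re w > 0} and extends continuously to the closure of S. For k ∈ ℤ let J_k = {z ∈ ∂S : τ(z) ∈ [kπi, (k+1)πi]} be the conformal partition arcs of ∂S. Then there exists a constant C₁ < ∞ such that for every k ∈ ℤ, diam(J_k) ≤ C₁ · exp(−π · dist(0, J_k)). -/

import Mathlib

open Set Metric

noncomputable section

/-- The half-strip `S = {x + iy : x > 0, |y| < 1/2}`. -/
def halfStrip : Set ℂ := {z : ℂ | 0 < z.re ∧ |z.im| < 1 / 2}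

/-- The conformal partition arcs of `∂S`: the points of the boundary of the
half-strip mapped by `τ(z) = sinh(πz)` into the segment `[kπi, (k+1)πi]` of the
imaginary axis. -/
def partitionArc (k : ℤ) : Set ℂ :=
  {z ∈ frontier halfStrip |
    (Complex.sinh ((Real.pi : ℂ) * z)).re = 0 ∧
    (Complex.sinh ((Real.pi : ℂ) * z)).im ∈ Icc (k * Real.pi) ((k + 1) * Real.pi)}

namespace Statement13Aux

lemma im_sinh_pi (z : ℂ) : (Complex.sinh ((Real.pi:ℂ) * z)).im
    = Real.cosh (Real.pi * z.re) * Real.sin (Real.pi * z.im) := by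
  have hz : (Real.pi:ℂ) * z
      = ((Real.pi * z.re : ℝ) : ℂ) + ((Real.pi * z.im : ℝ) : ℂ) * Complex.I := by
    push_cast
    rw [← Complex.re_add_im z]
    ring_nf
    simp [Complex.ext_iff]
  rw [hz, Complex.sinh_add, Complex.sinh_mul_I, Complex.cosh_mul_I]
  simp [← Complex.ofReal_mul, Complex.sinh_ofReal_re, Complex.sinh_ofReal_im,
    Complex.cosh_ofReal_re, Complex.cosh_ofReal_im, Complex.cos_ofReal_re,
    Complex.cos_ofReal_im, Complex.sin_ofReal_re, Complex.sin_ofReal_im]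

lemma isOpen_halfStrip : IsOpen halfStrip := by
  have h1 : IsOpen {z : ℂ | 0 < z.re} := isOpen_lt continuous_const Complex.continuous_re
  have h2 : IsOpen {z : ℂ | |z.im| < 1/2} :=
    isOpen_lt (continuous_abs.comp Complex.continuous_im) continuous_const
  exact h1.inter h2

lemma frontier_sub {z : ℂ} (hz : z ∈ frontier halfStrip) :
    0 ≤ z.re ∧ |z.im| ≤ 1/2 ∧ (z.re = 0 ∨ |z.im| = 1/2) := by
  rw [isOpen_halfStrip.frontier_eq] at hz
  obtain ⟨hcl, hns⟩ := hz
  have hsub : closure halfStrip ⊆ {z : ℂ | 0 ≤ z.re ∧ |z.im| ≤ 1/2} := by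
    apply closure_minimal
    · intro w hw; exact ⟨hw.1.le, hw.2.le⟩
    · exact (isClosed_le continuous_const Complex.continuous_re).inter
        (isClosed_le (continuous_abs.comp Complex.continuous_im) continuous_const)
  obtain ⟨h1, h2⟩ := hsub hcl
  refine ⟨h1, h2, ?_⟩
  by_contra h
  push_neg at h
  exact hns ⟨lt_of_le_of_ne h1 (Ne.symm h.1), lt_of_le_of_ne h2 h.2⟩

/-- Structure of the arc for `k ≥ 1`: it lies on the top edge. -/
lemma struct_pos {k : ℤ} (hk : 1 ≤ k) {z : ℂ} (hz : z ∈ partitionArc k) :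
    z.im = 1/2 ∧ 0 ≤ z.re ∧ (k:ℝ) * Real.pi ≤ Real.cosh (Real.pi * z.re)
      ∧ Real.cosh (Real.pi * z.re) ≤ ((k:ℝ) + 1) * Real.pi := by
  obtain ⟨hfr, -, him⟩ := hz
  rw [im_sinh_pi] at him
  obtain ⟨hlo, hhi⟩ := him
  push_cast at hlo hhi
  have hkR : (1:ℝ) ≤ (k:ℝ) := by exact_mod_cast hk
  have hπ : (3:ℝ) < Real.pi := Real.pi_gt_three
  obtain ⟨hre, him2, hcase⟩ := frontier_sub hfr
  have hy : z.im = 1/2 := by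
    rcases hcase with h0 | habs
    · exfalso
      rw [h0, mul_zero, Real.cosh_zero, one_mul] at hlo
      have := Real.sin_le_one (Real.pi * z.im)
      nlinarith
    · rcases abs_eq (by norm_num : (0:ℝ) ≤ 1/2) |>.1 habs with h | h
      · exact h
      · exfalso
        rw [h] at hlo
        have : Real.pi * (-(1/2)) = -(Real.pi/2) := by ring
        rw [this, Real.sin_neg, Real.sin_pi_div_two] at hlo
        have := Real.cosh_pos (Real.pi * z.re)
        nlinarith
  rw [hy] at hlo hhi
  have hs : Real.pi * (1/2) = Real.pi/2 := by ring
  rw [hs, Real.sin_pi_div_two, mul_one] at hlo hhi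
  exact ⟨hy, hre, hlo, hhi⟩

/-- Structure of the arc for `k = 0`. -/
lemma struct_zero {z : ℂ} (hz : z ∈ partitionArc 0) :
    0 ≤ z.re ∧ z.re ≤ 1 ∧ |z.im| ≤ 1/2 := by
  obtain ⟨hfr, -, him⟩ := hz
  rw [im_sinh_pi] at him
  obtain ⟨hlo, hhi⟩ := him
  push_cast at hlo hhi
  rw [zero_mul] at hlo
  rw [zero_add, one_mul] at hhi
  have hπ : (3:ℝ) < Real.pi := Real.pi_gt_three
  have hπ4 : Real.pi < 3.15 := Real.pi_lt_d2
  obtain ⟨hre, him2, hcase⟩ := frontier_sub hfr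
  refine ⟨hre, ?_, him2⟩
  rcases hcase with h0 | habs
  · rw [h0]; norm_num
  · have hy : z.im = 1/2 := by
      rcases abs_eq (by norm_num : (0:ℝ) ≤ 1/2) |>.1 habs with h | h
      · exact h
      · exfalso
        rw [h] at hlo
        have hneg : Real.pi * (-(1/2)) = -(Real.pi/2) := by ring
        rw [hneg, Real.sin_neg, Real.sin_pi_div_two] at hlo
        have := Real.cosh_pos (Real.pi * z.re)
        nlinarith
    rw [hy] at hhi
    have hs : Real.pi * (1/2) = Real.pi/2 := by ring
    rw [hs, Real.sin_pi_div_two, mul_one] at hhi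
    -- cosh (π x) ≤ π ⇒ exp (π x) ≤ 2π < exp π ⇒ x ≤ 1
    have hexp : Real.exp (Real.pi * z.re) ≤ 2 * Real.pi := by
      have hc := Real.cosh_eq (Real.pi * z.re)
      have := Real.exp_pos (-(Real.pi * z.re))
      nlinarith
    have h85 : (8.5:ℝ) ≤ Real.exp 3 := by
      have := Real.quadratic_le_exp_of_nonneg (by norm_num : (0:ℝ) ≤ 3)
      nlinarith
    have h3π : Real.exp 3 ≤ Real.exp Real.pi := Real.exp_le_exp.2 hπ.le
    have : Real.exp (Real.pi * z.re) < Real.exp Real.pi := by nlinarith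
    have := (Real.exp_lt_exp.1 this)
    nlinarith

lemma cosh_gap {a b : ℝ} (hb : 0 ≤ b) (hba : b ≤ a) :
    Real.sinh b * (a - b) ≤ Real.cosh a - Real.cosh b := by
  have h1 := Real.cosh_add b (a - b)
  rw [show b + (a - b) = a by ring] at h1
  have h2 : a - b ≤ Real.sinh (a - b) := Real.self_le_sinh_iff.2 (by linarith)
  nlinarith [Real.one_le_cosh (a - b), Real.cosh_pos b, Real.sinh_nonneg_iff.2 hb,
    Real.sinh_nonneg_iff.2 (show (0:ℝ) ≤ a - b by linarith)]

lemma gap {K a b : ℝ} (hK : Real.pi ≤ K) (ha : 0 ≤ a) (hb : 0 ≤ b)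
    (hKa : K ≤ Real.cosh a) (hKb : K ≤ Real.cosh b)
    (haU : Real.cosh a ≤ K + Real.pi) (hbU : Real.cosh b ≤ K + Real.pi) :
    |a - b| ≤ Real.pi / (K - 1) := by
  have hπ : (3:ℝ) < Real.pi := Real.pi_gt_three
  have hK1 : 0 < K - 1 := by linarith
  wlog h : b ≤ a generalizing a b
  · rw [abs_sub_comm]
    exact this hb ha hKb hKa hbU haU (by linarith)
  rw [abs_of_nonneg (by linarith)]
  have hsb : K - 1 ≤ Real.sinh b := by
    have hs0 : 0 ≤ Real.sinh b := Real.sinh_nonneg_iff.2 hb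
    have hsq : Real.cosh b ^ 2 = Real.sinh b ^ 2 + 1 := Real.cosh_sq b
    nlinarith
  have hkey : Real.sinh b * (a - b) ≤ Real.cosh a - Real.cosh b := cosh_gap hb h
  rw [le_div_iff₀ hK1]
  nlinarith

lemma exp_le_two_cosh (x : ℝ) : Real.exp x ≤ 2 * Real.cosh x := by
  have hc := Real.cosh_eq x
  have := Real.exp_pos (-x)
  nlinarith

/-- The main estimate for `k ≥ 0`. -/
lemma main_nonneg {k : ℤ} (hk : 0 ≤ k) :
    Metric.diam (partitionArc k) ≤
      10000 * Real.exp (-Real.pi * infDist (0 : ℂ) (partitionArc k)) := by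
  have hπ : (3:ℝ) < Real.pi := Real.pi_gt_three
  have hπ4 : Real.pi < 3.15 := Real.pi_lt_d2
  rcases (partitionArc k).eq_empty_or_nonempty with hemp | ⟨z₀, hz₀⟩
  · rw [hemp, Metric.diam_empty]
    positivity
  rcases eq_or_lt_of_le hk with h0 | h1
  · -- k = 0
    subst h0
    have hbound : ∀ z ∈ partitionArc 0, dist (0:ℂ) z ≤ 3/2 := by
      intro z hz
      obtain ⟨h1, h2, h3⟩ := struct_zero hz
      rw [dist_comm, Complex.dist_eq, sub_zero]
      calc ‖z‖ ≤ |z.re| + |z.im| := Complex.norm_le_abs_re_add_abs_im z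
        _ ≤ 3/2 := by rw [abs_of_nonneg h1]; linarith
    have hdiam : Metric.diam (partitionArc 0) ≤ 3 := by
      apply Metric.diam_le_of_forall_dist_le (by norm_num)
      intro z hz w hw
      calc dist z w ≤ dist z 0 + dist (0:ℂ) w := dist_triangle _ _ _
        _ ≤ 3/2 + 3/2 := by
            rw [dist_comm z 0]
            exact add_le_add (hbound z hz) (hbound w hw)
        _ = 3 := by norm_num
    have hd : infDist (0:ℂ) (partitionArc 0) ≤ 3/2 := (infDist_le_dist_of_mem hz₀).trans (hbound z₀ hz₀)
    have hd0 : 0 ≤ infDist (0:ℂ) (partitionArc 0) := infDist_nonneg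
    have hexp6 : Real.exp 6 < 410 := by
      have h1 : Real.exp 6 = Real.exp 1 ^ 6 := by
        rw [← Real.exp_nat_mul]; norm_num
      have h2 : Real.exp 1 ^ 6 < 2.7182818286 ^ 6 :=
        pow_lt_pow_left₀ Real.exp_one_lt_d9 (Real.exp_pos 1).le (by norm_num)
      calc Real.exp 6 = Real.exp 1 ^ 6 := h1
        _ < 2.7182818286 ^ 6 := h2
        _ < 410 := by norm_num
    have hge : Real.exp (-6) ≤ Real.exp (-Real.pi * infDist (0:ℂ) (partitionArc 0)) := by
      apply Real.exp_le_exp.2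
      nlinarith
    have : (1:ℝ)/410 < Real.exp (-6) := by
      rw [Real.exp_neg, ← one_div]
      exact one_div_lt_one_div_of_lt (Real.exp_pos 6) hexp6
    nlinarith
  · -- k ≥ 1
    have hk1 : 1 ≤ k := h1
    have hkR : (1:ℝ) ≤ (k:ℝ) := by exact_mod_cast hk1
    have hden : (0:ℝ) < (k:ℝ) * Real.pi - 1 := by nlinarith
    -- diameter bound
    have hdiam : Metric.diam (partitionArc k) ≤ 1 / ((k:ℝ) * Real.pi - 1) := by
      apply Metric.diam_le_of_forall_dist_le (by positivity)
      intro z hz w hw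
      obtain ⟨hzim, hzre, hzlo, hzhi⟩ := struct_pos hk1 hz
      obtain ⟨hwim, hwre, hwlo, hwhi⟩ := struct_pos hk1 hw
      have him : z.im = w.im := by rw [hzim, hwim]
      have hdist : dist z w = |z.re - w.re| := by
        rw [Complex.dist_of_im_eq him, Real.dist_eq]
      rw [hdist]
      have hKπ : Real.pi ≤ (k:ℝ) * Real.pi := by nlinarith
      have hupz : Real.cosh (Real.pi * z.re) ≤ (k:ℝ) * Real.pi + Real.pi := by nlinarith
      have hupw : Real.cosh (Real.pi * w.re) ≤ (k:ℝ) * Real.pi + Real.pi := by nlinarith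
      have hg := gap hKπ (by positivity : (0:ℝ) ≤ Real.pi * z.re)
        (by positivity : (0:ℝ) ≤ Real.pi * w.re) hzlo hwlo hupz hupw
      have habs : |Real.pi * z.re - Real.pi * w.re| = Real.pi * |z.re - w.re| := by
        rw [← mul_sub, abs_mul, abs_of_pos Real.pi_pos]
      rw [habs] at hg
      rw [le_div_iff₀ hden] at hg ⊢
      nlinarith [Real.pi_pos]
    -- distance bound
    obtain ⟨hzim, hzre, hzlo, hzhi⟩ := struct_pos hk1 hz₀
    have hdle : infDist (0:ℂ) (partitionArc k) ≤ z₀.re + 1/2 := by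
      refine (infDist_le_dist_of_mem hz₀).trans ?_
      rw [dist_comm, Complex.dist_eq, sub_zero]
      calc ‖z₀‖ ≤ |z₀.re| + |z₀.im| := Complex.norm_le_abs_re_add_abs_im z₀
        _ = z₀.re + 1/2 := by rw [abs_of_nonneg hzre, hzim]; norm_num
    have hexpx : Real.exp (Real.pi * z₀.re) ≤ 2 * (((k:ℝ) + 1) * Real.pi) := by
      have := exp_le_two_cosh (Real.pi * z₀.re)
      nlinarith
    have hexp2 : Real.exp 2 < 8 := by
      have h1 : Real.exp 2 = Real.exp 1 ^ 2 := by rw [← Real.exp_nat_mul]; norm_num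
      nlinarith [Real.exp_one_lt_d9, (Real.exp_pos 1).le]
    -- exp(-π d) ≥ exp(-π x₀ - π/2) ≥ 1/(16 (k+1) π)
    have hmono : Real.exp (-(Real.pi * z₀.re) - 2) ≤
        Real.exp (-Real.pi * infDist (0:ℂ) (partitionArc k)) := by
      apply Real.exp_le_exp.2
      have : Real.pi * infDist (0:ℂ) (partitionArc k) ≤ Real.pi * (z₀.re + 1/2) :=
        mul_le_mul_of_nonneg_left hdle Real.pi_pos.le
      nlinarith
    have hkey : 1 / (16 * (((k:ℝ) + 1) * Real.pi)) ≤ Real.exp (-(Real.pi * z₀.re) - 2) := by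
      rw [show -(Real.pi * z₀.re) - 2 = -(Real.pi * z₀.re) + (-2) by ring, Real.exp_add,
        Real.exp_neg, Real.exp_neg]
      rw [div_le_iff₀ (by positivity)]
      rw [show (Real.exp (Real.pi * z₀.re))⁻¹ * (Real.exp 2)⁻¹ * (16 * (((k:ℝ) + 1) * Real.pi))
        = (16 * (((k:ℝ) + 1) * Real.pi)) / (Real.exp (Real.pi * z₀.re) * Real.exp 2) by ring]
      rw [le_div_iff₀ (by positivity)]
      have h1 : Real.exp (Real.pi * z₀.re) * Real.exp 2 ≤ 2 * (((k:ℝ)+1) * Real.pi) * 8 := by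
        have := (Real.exp_pos (Real.pi * z₀.re))
        have := (Real.exp_pos 2)
        nlinarith
      nlinarith
    have hfinal : 1 / ((k:ℝ) * Real.pi - 1) ≤ 10000 * (1 / (16 * (((k:ℝ) + 1) * Real.pi))) := by
      rw [mul_one_div, div_le_div_iff₀ hden (by positivity)]
      nlinarith
    calc Metric.diam (partitionArc k) ≤ 1 / ((k:ℝ) * Real.pi - 1) := hdiam
      _ ≤ 10000 * (1 / (16 * (((k:ℝ) + 1) * Real.pi))) := hfinal
      _ ≤ 10000 * Real.exp (-Real.pi * infDist (0:ℂ) (partitionArc k)) := by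
          have := hkey.trans hmono
          nlinarith

lemma halfStrip_conj_preimage : (fun z => (starRingEnd ℂ) z) ⁻¹' halfStrip = halfStrip := by
  ext z
  simp [halfStrip, Complex.conj_re, Complex.conj_im, abs_neg]

lemma frontier_conj_mem {z : ℂ} :
    (starRingEnd ℂ) z ∈ frontier halfStrip ↔ z ∈ frontier halfStrip := by
  have h := Complex.conjLIE.toHomeomorph.preimage_frontier halfStrip
  have h2 : (fun z => (starRingEnd ℂ) z) ⁻¹' frontier halfStrip = frontier halfStrip := by
    calc (fun z => (starRingEnd ℂ) z) ⁻¹' frontier halfStrip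
        = frontier ((fun z => (starRingEnd ℂ) z) ⁻¹' halfStrip) := h
      _ = frontier halfStrip := by rw [halfStrip_conj_preimage]
  constructor
  · intro hz
    have : z ∈ (fun z => (starRingEnd ℂ) z) ⁻¹' frontier halfStrip := hz
    rwa [h2] at this
  · intro hz
    rw [← h2] at hz
    exact hz

lemma arc_conj (k : ℤ) : partitionArc k = (starRingEnd ℂ) '' partitionArc (-1 - k) := by
  ext z
  constructor
  · intro hz
    refine ⟨(starRingEnd ℂ) z, ?_, Complex.conj_conj z⟩
    obtain ⟨hfr, hre, him⟩ := hz
    have hmul : (Real.pi : ℂ) * ((starRingEnd ℂ) z) = (starRingEnd ℂ) ((Real.pi : ℂ) * z) := by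
      rw [map_mul, Complex.conj_ofReal]
    refine ⟨frontier_conj_mem.2 hfr, ?_, ?_⟩
    · rw [hmul, Complex.sinh_conj, Complex.conj_re]; exact hre
    · rw [hmul, Complex.sinh_conj, Complex.conj_im]
      obtain ⟨h1, h2⟩ := him
      push_cast at h1 h2 ⊢
      constructor <;> nlinarith
  · rintro ⟨w, hw, rfl⟩
    obtain ⟨hfr, hre, him⟩ := hw
    have hmul : (Real.pi : ℂ) * ((starRingEnd ℂ) w) = (starRingEnd ℂ) ((Real.pi : ℂ) * w) := by
      rw [map_mul, Complex.conj_ofReal]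
    refine ⟨frontier_conj_mem.2 hfr, ?_, ?_⟩
    · rw [hmul, Complex.sinh_conj, Complex.conj_re]; exact hre
    · rw [hmul, Complex.sinh_conj, Complex.conj_im]
      obtain ⟨h1, h2⟩ := him
      push_cast at h1 h2 ⊢
      constructor <;> nlinarith

end Statement13Aux

/-- Exponential decay of the conformal partition arcs of the boundary of the
half-strip: there is `C₁ < ∞` with `diam J_k ≤ C₁ · exp(-π · dist(0, J_k))`
for all `k`. -/
theorem statement13 :
    ∃ C₁ : ℝ, 0 < C₁ ∧
      ∀ k : ℤ, Metric.diam (partitionArc k) ≤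
        C₁ * Real.exp (-Real.pi * infDist (0 : ℂ) (partitionArc k)) := by
  refine ⟨10000, by norm_num, fun k => ?_⟩
  rcases le_or_gt 0 k with hk | hk
  · exact Statement13Aux.main_nonneg hk
  · have hm : 0 ≤ -1 - k := by omega
    have hdiam : Metric.diam (partitionArc k) = Metric.diam (partitionArc (-1 - k)) := by
      rw [Statement13Aux.arc_conj k, Complex.isometry_conj.diam_image]
    have hdist : infDist (0 : ℂ) (partitionArc k) = infDist (0 : ℂ) (partitionArc (-1 - k)) := by
      have h := Metric.infDist_image Complex.isometry_conj (x := (0 : ℂ)) (t := partitionArc (-1 - k))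
      rw [map_zero] at h
      rw [Statement13Aux.arc_conj k, h]
    rw [hdiam, hdist]
    exact Statement13Aux.main_nonneg hm
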